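/- Given a VDPA M, there exists a DFA M' over the stack-aware alphabet Σ' with the same state set such that for every well-matched word w, M accepts w if and only if M' accepts T(w). -/

import Mathlib

inductive Kind : Type
  | call | ret | internal
deriving DecidableEq

def callCount {α : Type} (k : α → Kind) (w : List α) : ℕ :=
  w.countP (fun a => decide (k a = Kind.call))

def retCount {α : Type} (k : α → Kind) (w : List α) : ℕ :=
  w.countP (fun a => decide (k a = Kind.ret))

/-- A word is well-matched if every prefix has at least as many call symbols as
return symbols, and the total numbers of call and return symbols are equal. -/
def WellMatched {α : Type} (k : α → Kind) (w : List α) : Prop :=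
  (∀ p, p <+: w → retCount k p ≤ callCount k p) ∧ callCount k w = retCount k w

/-- The stack-aware transformation, carrying the stack of unmatched call symbols. -/
def Tgo {α : Type} (k : α → Kind) : List α → List α → List (α ⊕ α × α)
  | _, [] => []
  | st, a :: rest =>
    match k a with
    | Kind.call => Sum.inl a :: Tgo k (a :: st) rest
    | Kind.internal => Sum.inl a :: Tgo k st rest
    | Kind.ret =>
      match st with
      | [] => Sum.inl a :: Tgo k [] rest
      | c :: s => Sum.inr (a, c) :: Tgo k s rest

/-- The stack-aware transformation: each return symbol `r` is replaced by the pair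
`(r, c)` where `c` is its matching call symbol; other symbols are kept. -/
def T {α : Type} (k : α → Kind) (w : List α) : List (α ⊕ α × α) :=
  Tgo k [] w

/-- The stack of unmatched call symbols (head = top) after processing `w`. -/
def stackAfter {α : Type} (k : α → Kind) (w : List α) : List α :=
  w.foldl
    (fun st a =>
      match k a with
      | Kind.call => a :: st
      | Kind.ret => st.tail
      | Kind.internal => st) []

/-- A visibly deterministic pushdown automaton. -/
structure VDPA (α Q : Type) where
  kind : α → Kind
  δcall : Q → α → Q
  δint : Q → α → Q
  /-- return transition: state, input, popped top-of-stack symbol -/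
  δret : Q → α → α → Q
  q0 : Q
  F : Set Q

/-- One step of the VDPA on a configuration; `none` means the run has failed
(a pop from the empty stack occurred). -/
def VDPA.step {α Q : Type} (M : VDPA α Q) :
    Option (Q × List α) → α → Option (Q × List α)
  | none, _ => none
  | some (q, st), a =>
    match M.kind a with
    | Kind.call => some (M.δcall q a, a :: st)
    | Kind.internal => some (M.δint q a, st)
    | Kind.ret =>
      match st with
      | [] => none
      | c :: s => some (M.δret q a c, s)

def VDPA.run {α Q : Type} (M : VDPA α Q) (w : List α) : Option (Q × List α) :=
  w.foldl M.step (some (M.q0, []))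

/-- `M` accepts `w` iff processing succeeds and ends in an accepting state with empty stack. -/
def VDPA.Accepts {α Q : Type} (M : VDPA α Q) (w : List α) : Prop :=
  ∃ q ∈ M.F, M.run w = some (q, [])

/-! The DFA reads off the annotated return letter `(r, c)` the call symbol `c` that `M` would pop.
Hence, as long as the stack never underflows, the run of `M` from `(q, st)` on `w` is the DFA run
from `q` on `Tgo st w` paired with the evolution of the stack. For a well-matched word the final
stack has height `#calls - #returns = 0`, so acceptance by `M` is acceptance by the DFA. -/
section Stack

variable {α : Type} (k : α → Kind)

def stackStep (st : List α) (a : α) : List α :=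
  match k a with
  | Kind.call => a :: st
  | Kind.ret => st.tail
  | Kind.internal => st

def annotate (st : List α) (a : α) : α ⊕ α × α :=
  match k a, st with
  | Kind.ret, c :: _ => Sum.inr (a, c)
  | _, _ => Sum.inl a

theorem Tgo_cons (st : List α) (a : α) (w : List α) :
    Tgo k st (a :: w) = annotate k st a :: Tgo k (stackStep k st a) w := by
  rcases h : k a <;> cases st <;> simp [Tgo, annotate, stackStep, h]

theorem callCount_cons (a : α) (w : List α) :
    callCount k (a :: w) = callCount k w + if k a = Kind.call then 1 else 0 := by
  simp [callCount, List.countP_cons]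

theorem retCount_cons (a : α) (w : List α) :
    retCount k (a :: w) = retCount k w + if k a = Kind.ret then 1 else 0 := by
  simp [retCount, List.countP_cons]

/-- `w` can be read starting from a stack of height `n` without popping the empty stack. -/
def NoUnderflow (n : ℕ) (w : List α) : Prop :=
  ∀ p, p <+: w → retCount k p ≤ callCount k p + n

variable {k}

theorem NoUnderflow.ne_nil {st : List α} {a : α} {w : List α}
    (h : NoUnderflow k st.length (a :: w)) (ha : k a = Kind.ret) : st ≠ [] := by
  rintro rfl
  simpa [callCount_cons, retCount_cons, ha, callCount, retCount] using h [a] (by simp)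

theorem NoUnderflow.stackStep {st : List α} {a : α} {w : List α}
    (h : NoUnderflow k st.length (a :: w)) : NoUnderflow k (stackStep k st a).length w := by
  intro p hp
  have hap := h (a :: p) (List.cons_prefix_cons.mpr ⟨rfl, hp⟩)
  rcases ha : k a
  · simp [callCount_cons, retCount_cons, ha, _root_.stackStep] at hap ⊢; omega
  · obtain ⟨c, s, rfl⟩ := List.exists_cons_of_ne_nil (h.ne_nil ha)
    simp [callCount_cons, retCount_cons, ha, _root_.stackStep] at hap ⊢; omega
  · simpa [callCount_cons, retCount_cons, ha, _root_.stackStep] using hap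

theorem length_foldl_stackStep {st w : List α} (h : NoUnderflow k st.length w) :
    (w.foldl (stackStep k) st).length + retCount k w = st.length + callCount k w := by
  induction w generalizing st with
  | nil => simp [callCount, retCount]
  | cons a w ih =>
    rw [List.foldl_cons, callCount_cons, retCount_cons, ← add_assoc, ih h.stackStep]
    rcases ha : k a
    · simp [stackStep, ha]; omega
    · obtain ⟨c, s, rfl⟩ := List.exists_cons_of_ne_nil (h.ne_nil ha)
      simp [stackStep, ha]; omega
    · simp [stackStep, ha]

end Stack

namespace VDPA

variable {α Q : Type} (M : VDPA α Q)

/-- The DFA `M'` over the stack-aware alphabet. -/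
def toDFA : DFA (α ⊕ α × α) Q where
  step q
    | Sum.inl a =>
      match M.kind a with
      | Kind.call => M.δcall q a
      | Kind.internal => M.δint q a
      -- an unmatched return; `T` never produces one from a well-matched word
      | Kind.ret => q
    | Sum.inr (r, c) => M.δret q r c
  start := M.q0
  accept := M.F

variable {M}

theorem step_some {q : Q} {st : List α} {a : α} (h : M.kind a = Kind.ret → st ≠ []) :
    M.step (some (q, st)) a =
      some (M.toDFA.step q (annotate M.kind st a), stackStep M.kind st a) := by
  rcases ha : M.kind a
  · simp [step, toDFA, annotate, stackStep, ha]
  · obtain ⟨c, s, rfl⟩ := List.exists_cons_of_ne_nil (h ha)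
    simp [step, toDFA, annotate, stackStep, ha]
  · simp [step, toDFA, annotate, stackStep, ha]

theorem foldl_step_some {q : Q} {st w : List α} (h : NoUnderflow M.kind st.length w) :
    w.foldl M.step (some (q, st)) =
      some (M.toDFA.evalFrom q (Tgo M.kind st w), w.foldl (stackStep M.kind) st) := by
  induction w generalizing q st with
  | nil => simp [Tgo]
  | cons a w ih =>
    rw [List.foldl_cons, step_some (h.ne_nil ·), ih h.stackStep, Tgo_cons, DFA.evalFrom_cons,
      List.foldl_cons]

theorem run_eq_of_wellMatched {w : List α} (hw : WellMatched M.kind w) :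
    M.run w = some (M.toDFA.eval (T M.kind w), []) := by
  obtain ⟨hpre, hcount⟩ := hw
  have h : NoUnderflow M.kind ([] : List α).length w := by simpa [NoUnderflow] using hpre
  have hstack : w.foldl (stackStep M.kind) [] = [] := by
    have := length_foldl_stackStep h
    simp only [List.length_nil, zero_add] at this
    exact List.eq_nil_of_length_eq_zero (by omega)
  rw [run, foldl_step_some h, hstack]
  rfl

theorem accepts_iff_mem_toDFA_accepts {w : List α} (hw : WellMatched M.kind w) :
    M.Accepts w ↔ T M.kind w ∈ M.toDFA.accepts := by
  simp [Accepts, run_eq_of_wellMatched hw, DFA.mem_accepts, toDFA]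

end VDPA

/-- For any VDPA `M` there is a DFA over the stack-aware alphabet, with the same
state set `Q`, initial state `M.q0` and accepting states `M.F`, that accepts
`T w` exactly when `M` accepts `w`, for every well-matched word `w`. -/
theorem vdpa_to_dfa {α Q : Type} (M : VDPA α Q) :
    ∃ δ' : Q → (α ⊕ α × α) → Q,
      ∀ w : List α, WellMatched M.kind w →
        (M.Accepts w ↔ (T M.kind w).foldl δ' M.q0 ∈ M.F) :=
  ⟨M.toDFA.step, fun _ hw => VDPA.accepts_iff_mem_toDFA_accepts hw⟩
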